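/- Let A ∈ ℝ^{m×n}, U ∈ ℝ^{p×n} and b ∈ ℝ^m with A g = b solvable, and let N ∈ ℝ^{n×k} be a matrix whose columns span the null space of A. If u₀ ∈ ℝ^p and M ∈ ℝ^{p×d} are such that {u₀ + M z : z ∈ ℝ^d} = {U g : g ∈ ℝ^n, A g = b}, then d ≥ rank(U N). That is, any affine parameterization of the image of the solution set requires at least rank(U N) parameters. -/
import Mathlib


/-- Minimality part of the minimal parameterization theorem: if `A g = b` is
solvable, the columns of `N` span the null space of `A`, and
`{u₀ + M z : z ∈ ℝ^d}` equals the image set `{U g : A g = b}`, then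
`d ≥ rank (U N)`. -/
theorem minimal_parameterization_lower_bound
    (m n p k d : ℕ)
    (A : Matrix (Fin m) (Fin n) ℝ) (U : Matrix (Fin p) (Fin n) ℝ)
    (b : Fin m → ℝ)
    (hb : ∃ g : Fin n → ℝ, A.mulVec g = b)
    (N : Matrix (Fin n) (Fin k) ℝ)
    (hN : ∀ x : Fin n → ℝ, (∃ z : Fin k → ℝ, N.mulVec z = x) ↔ A.mulVec x = 0)
    (u₀ : Fin p → ℝ) (M : Matrix (Fin p) (Fin d) ℝ)
    (hparam : {x : Fin p → ℝ | ∃ z : Fin d → ℝ, x = u₀ + M.mulVec z} =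
      {x : Fin p → ℝ | ∃ g : Fin n → ℝ, A.mulVec g = b ∧ x = U.mulVec g}) :
    d ≥ (U * N).rank := by
  obtain ⟨g₀, hg₀⟩ := hb
  -- Every vector in the range of (U*N) lies in the range of M.
  have hsub : LinearMap.range (U * N).mulVecLin ≤ LinearMap.range M.mulVecLin := by
    rintro x ⟨z, rfl⟩
    have hAN : A.mulVec (N.mulVec z) = 0 := (hN (N.mulVec z)).mp ⟨z, rfl⟩
    have h1 : U.mulVec (g₀ + N.mulVec z) ∈
        {x : Fin p → ℝ | ∃ g : Fin n → ℝ, A.mulVec g = b ∧ x = U.mulVec g} := by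
      exact ⟨g₀ + N.mulVec z, by rw [Matrix.mulVec_add, hAN, hg₀, add_zero], rfl⟩
    have h2 : U.mulVec g₀ ∈
        {x : Fin p → ℝ | ∃ g : Fin n → ℝ, A.mulVec g = b ∧ x = U.mulVec g} :=
      ⟨g₀, hg₀, rfl⟩
    rw [← hparam] at h1 h2
    obtain ⟨z₁, hz₁⟩ := h1
    obtain ⟨z₂, hz₂⟩ := h2
    refine ⟨z₁ - z₂, ?_⟩
    have : (U * N).mulVecLin z = U.mulVec (g₀ + N.mulVec z) - U.mulVec g₀ := by
      simp [Matrix.mulVecLin_apply, Matrix.mulVec_add, Matrix.mulVec_mulVec]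
    rw [this, hz₁, hz₂]
    simp [Matrix.mulVecLin_apply, Matrix.mulVec_sub]
  have h1 : (U * N).rank ≤ M.rank := by
    simpa [Matrix.rank] using Submodule.finrank_mono hsub
  have h2 : M.rank ≤ d := by
    simpa using M.rank_le_card_width
  exact le_trans h1 h2
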